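/- Conditional mutual information with a classical conditioning system equals the average of mutual informations: let n ≥ 1, let q be a probability distribution on Fin n, and for each λ ∈ Fin n let ρ^λ be a density matrix (Hermitian, positive semidefinite, trace 1) indexed by K×L. Define ρ_{KLE}, indexed by K×L×Fin n, by ρ_{KLE} := ∑_λ q(λ)·(ρ^λ ⊗ |λ⟩⟨λ|). Then I(K;L|E)_ρ = ∑_{λ : q(λ)>0} q(λ)·I(K;L)_{ρ^λ}, where I(K;L)_σ := H(σ_K) + H(σ_L) − H(σ_{KL}). In particular, if each ρ^λ is a product state ρ^λ = θ^λ ⊗ κ^λ (Kronecker product of density matrices on K and on L), then I(K;L|E)_ρ = 0. -/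

import Mathlib

open scoped BigOperators
open Matrix Kronecker
open scoped ComplexOrder

noncomputable section

/-- `φ(t) = -t·log₂ t`. -/
noncomputable def entPhi (t : ℝ) : ℝ := -(t * Real.logb 2 t)

/-- von Neumann entropy (in bits) of a Hermitian matrix, via its eigenvalues. -/
noncomputable def vnEntropy {n : Type*} [Fintype n] [DecidableEq n] (ρ : Matrix n n ℂ) : ℝ :=
  if h : ρ.IsHermitian then ∑ i, entPhi (h.eigenvalues i) else 0

/-- Partial trace over the second factor. -/
def ptrace2 {I J : Type*} [Fintype J] (ρ : Matrix (I × J) (I × J) ℂ) : Matrix I I ℂ :=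
  Matrix.of fun i i' => ∑ j, ρ (i, j) (i', j)

/-- Partial trace over the first factor. -/
def ptrace1 {I J : Type*} [Fintype I] (ρ : Matrix (I × J) (I × J) ℂ) : Matrix J J ℂ :=
  Matrix.of fun j j' => ∑ i, ρ (i, j) (i, j')

/-- Marginal on `K × M` of a state on `K × L × M`. -/
def margKM {K L M : Type*} [Fintype L] (σ : Matrix (K × L × M) (K × L × M) ℂ) :
    Matrix (K × M) (K × M) ℂ :=
  Matrix.of fun p q => ∑ l, σ (p.1, l, p.2) (q.1, l, q.2)

/-- Marginal on `L × M` of a state on `K × L × M`. -/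
def margLM {K L M : Type*} [Fintype K] (σ : Matrix (K × L × M) (K × L × M) ℂ) :
    Matrix (L × M) (L × M) ℂ :=
  Matrix.of fun p q => ∑ k, σ (k, p.1, p.2) (k, q.1, q.2)

/-- Marginal on `M` of a state on `K × L × M`. -/
def margM {K L M : Type*} [Fintype K] [Fintype L] (σ : Matrix (K × L × M) (K × L × M) ℂ) :
    Matrix M M ℂ :=
  Matrix.of fun m m' => ∑ k, ∑ l, σ (k, l, m) (k, l, m')

/-- Conditional mutual information `I(K;L|M)` of a state on `K × L × M`. -/
noncomputable def CMI {K L M : Type*} [Fintype K] [Fintype L] [Fintype M]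
    [DecidableEq K] [DecidableEq L] [DecidableEq M]
    (σ : Matrix (K × L × M) (K × L × M) ℂ) : ℝ :=
  vnEntropy (margKM σ) + vnEntropy (margLM σ) - vnEntropy σ - vnEntropy (margM σ)

def IsProbDist {X : Type*} [Fintype X] (p : X → ℝ) : Prop :=
  (∀ x, 0 ≤ p x) ∧ ∑ x, p x = 1

/-- An assemblage: PSD members, normalized for each input, and no-signaling. -/
def IsAssemblage {A X B : Type*} [Fintype A] [Fintype B]
    (ρ : A → X → Matrix B B ℂ) : Prop :=
  (∀ a x, (ρ a x).PosSemidef) ∧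
  (∀ x, ∑ a, (ρ a x).trace = 1) ∧
  (∀ x x' : X, ∑ a, ρ a x = ∑ a, ρ a x')

/-- Mutual information `I(K;L)` of a state on `K × L`. -/
noncomputable def MI {K L : Type*} [Fintype K] [Fintype L] [DecidableEq K] [DecidableEq L]
    (σ : Matrix (K × L) (K × L) ℂ) : ℝ :=
  vnEntropy (ptrace2 σ) + vnEntropy (ptrace1 σ) - vnEntropy σ

/-! Up to reindexing, `ρ_KLE` and its marginals `ρ_KE`, `ρ_LE` are block diagonal with blocks
`q(e) • σ_e`, where `σ_e` is `ρ^e` or one of its marginals, each of trace one. The spectrum of such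
a matrix is the union of the scaled spectra, so its entropy is `∑ₑ q(e) H(σ_e) + H(q)`, while
`ρ_E = diag q` has entropy `H(q)`. The four `H(q)` terms cancel in `I(K;L|E)`, leaving
`∑ₑ q(e) I(K;L)_{ρ^e}`. For a product state the spectrum of `θ ⊗ κ` consists of the products of
eigenvalues, whence `H(θ ⊗ κ) = H(θ) + H(κ)` and `I(K;L) = 0`. -/

open Polynomial

lemma entPhi_mul (a b : ℝ) : entPhi (a * b) = a * entPhi b + b * entPhi a := by
  rcases eq_or_ne a 0 with rfl | ha
  · simp [entPhi]
  rcases eq_or_ne b 0 with rfl | hb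
  · simp [entPhi]
  simp only [entPhi, Real.logb, Real.log_mul ha hb]
  ring

lemma sum_entPhi_mul_of_sum_eq_one {ι : Type*} [Fintype ι] (a : ℝ) {b : ι → ℝ}
    (hb : ∑ i, b i = 1) : ∑ i, entPhi (a * b i) = a * ∑ i, entPhi (b i) + entPhi a := by
  simp only [entPhi_mul, Finset.sum_add_distrib, ← Finset.mul_sum, ← Finset.sum_mul, hb, one_mul]

namespace Matrix

variable {m n : Type*} [Fintype m] [DecidableEq m] [Fintype n] [DecidableEq n]

lemma IsHermitian.sum_eigenvalues_eq_one {A : Matrix m m ℂ} (hA : A.IsHermitian)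
    (htr : A.trace = 1) : ∑ i, hA.eigenvalues i = 1 := by
  simpa using congrArg Complex.re (hA.trace_eq_sum_eigenvalues.symm.trans htr)

lemma IsHermitian.eq_mul_diagonal_mul_conjTranspose {A : Matrix m m ℂ} (hA : A.IsHermitian) :
    A = (hA.eigenvectorUnitary : Matrix m m ℂ) * diagonal (fun i => (hA.eigenvalues i : ℂ)) *
      (hA.eigenvectorUnitary : Matrix m m ℂ)ᴴ :=
  hA.spectral_theorem

lemma IsHermitian.eigenvectorUnitary_conjTranspose_mul_self {A : Matrix m m ℂ}
    (hA : A.IsHermitian) :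
    (hA.eigenvectorUnitary : Matrix m m ℂ)ᴴ * (hA.eigenvectorUnitary : Matrix m m ℂ) = 1 :=
  UnitaryGroup.star_mul_self _

lemma vnEntropy_of_isHermitian {A : Matrix m m ℂ} (hA : A.IsHermitian) :
    vnEntropy A = ∑ i, entPhi (hA.eigenvalues i) :=
  dif_pos hA

lemma vnEntropy_eq_sum_roots_charpoly {A : Matrix m m ℂ} (hA : A.IsHermitian) :
    vnEntropy A = (A.charpoly.roots.map fun z => entPhi z.re).sum := by
  rw [vnEntropy_of_isHermitian hA, hA.roots_charpoly_eq_eigenvalues, Multiset.map_map,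
    Finset.sum_map_val]
  simp

lemma vnEntropy_reindex (e : m ≃ n) {A : Matrix m m ℂ} (hA : A.IsHermitian) :
    vnEntropy (reindex e e A) = vnEntropy A := by
  have hA' : (reindex e e A).IsHermitian := hA.submatrix _
  rw [vnEntropy_eq_sum_roots_charpoly hA', vnEntropy_eq_sum_roots_charpoly hA, charpoly_reindex]

/-- The spectrum of `U D Uᴴ` is that of `Uᴴ U D = D`. -/
lemma vnEntropy_mul_diagonal_mul_conjTranspose {U : Matrix m m ℂ} (hU : Uᴴ * U = 1)
    (d : m → ℝ) : vnEntropy (U * diagonal (fun i => (d i : ℂ)) * Uᴴ) = ∑ i, entPhi (d i) := by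
  have hD : (diagonal fun i => (d i : ℂ)).IsHermitian :=
    isHermitian_diagonal_of_self_adjoint _ (by ext i; simp)
  have hcharpoly : (U * diagonal (fun i => (d i : ℂ)) * Uᴴ).charpoly
      = ∏ i, (X - C (d i : ℂ)) := by
    rw [charpoly_mul_comm, ← mul_assoc, hU, one_mul, charpoly_diagonal]
  rw [vnEntropy_eq_sum_roots_charpoly (isHermitian_mul_mul_conjTranspose U hD), hcharpoly,
    roots_prod _ _ (Finset.prod_ne_zero_iff.mpr fun i _ => X_sub_C_ne_zero _)]
  simp

lemma vnEntropy_diagonal (d : m → ℝ) :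
    vnEntropy (diagonal fun i => (d i : ℂ)) = ∑ i, entPhi (d i) := by
  simpa using vnEntropy_mul_diagonal_mul_conjTranspose (U := 1) (by simp) d

lemma vnEntropy_kronecker {θ : Matrix m m ℂ} {κ : Matrix n n ℂ} (hθ : θ.IsHermitian)
    (hκ : κ.IsHermitian) (htrθ : θ.trace = 1) (htrκ : κ.trace = 1) :
    vnEntropy (θ ⊗ₖ κ) = vnEntropy θ + vnEntropy κ := by
  set U := (hθ.eigenvectorUnitary : Matrix m m ℂ) ⊗ₖ (hκ.eigenvectorUnitary : Matrix n n ℂ)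
  have hU : Uᴴ * U = 1 := by
    rw [conjTranspose_kronecker, ← mul_kronecker_mul,
      hθ.eigenvectorUnitary_conjTranspose_mul_self, hκ.eigenvectorUnitary_conjTranspose_mul_self,
      one_kronecker_one]
  have hdecomp : θ ⊗ₖ κ
      = U * diagonal (fun p => ((hθ.eigenvalues p.1 * hκ.eigenvalues p.2 : ℝ) : ℂ)) * Uᴴ := by
    conv_lhs => rw [hθ.eq_mul_diagonal_mul_conjTranspose, hκ.eq_mul_diagonal_mul_conjTranspose]
    rw [conjTranspose_kronecker, mul_kronecker_mul, mul_kronecker_mul,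
      diagonal_kronecker_diagonal]
    push_cast
    rfl
  rw [hdecomp, vnEntropy_mul_diagonal_mul_conjTranspose hU, Fintype.sum_prod_type,
    vnEntropy_of_isHermitian hθ, vnEntropy_of_isHermitian hκ]
  simp_rw [sum_entPhi_mul_of_sum_eq_one _ (hκ.sum_eigenvalues_eq_one htrκ)]
  rw [Finset.sum_add_distrib, ← Finset.sum_mul, hθ.sum_eigenvalues_eq_one htrθ]
  ring

lemma vnEntropy_blockDiagonal_smul {o : Type*} [Fintype o] [DecidableEq o] (q : o → ℝ)
    {B : o → Matrix m m ℂ} (hB : ∀ k, (B k).IsHermitian) (htr : ∀ k, (B k).trace = 1) :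
    vnEntropy (blockDiagonal fun k => (q k : ℂ) • B k)
      = ∑ k, (q k * vnEntropy (B k) + entPhi (q k)) := by
  set U := blockDiagonal fun k => ((hB k).eigenvectorUnitary : Matrix m m ℂ)
  have hU : Uᴴ * U = 1 := by
    simp only [U, blockDiagonal_conjTranspose, ← blockDiagonal_mul,
      IsHermitian.eigenvectorUnitary_conjTranspose_mul_self]
    exact blockDiagonal_one
  have hdecomp : blockDiagonal (fun k => (q k : ℂ) • B k)
      = U * blockDiagonal (fun k => diagonal fun i => ((q k * (hB k).eigenvalues i : ℝ) : ℂ))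
        * Uᴴ := by
    rw [blockDiagonal_conjTranspose, ← blockDiagonal_mul, ← blockDiagonal_mul]
    congr 1
    ext1 k
    have hscale : diagonal (fun i => ((q k * (hB k).eigenvalues i : ℝ) : ℂ))
        = (q k : ℂ) • diagonal (fun i => ((hB k).eigenvalues i : ℂ)) := by
      rw [← diagonal_smul]
      push_cast
      rfl
    conv_lhs => rw [(hB k).eq_mul_diagonal_mul_conjTranspose]
    rw [hscale, Matrix.mul_smul, Matrix.smul_mul]
  rw [hdecomp, blockDiagonal_diagonal, vnEntropy_mul_diagonal_mul_conjTranspose hU,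
    Fintype.sum_prod_type_right]
  refine Finset.sum_congr rfl fun k _ => ?_
  dsimp only
  rw [sum_entPhi_mul_of_sum_eq_one _ ((hB k).sum_eigenvalues_eq_one (htr k)),
    vnEntropy_of_isHermitian (hB k)]

end Matrix

section PartialTrace

variable {I J : Type*}

lemma ptrace2_isHermitian [Fintype J] {A : Matrix (I × J) (I × J) ℂ} (hA : A.IsHermitian) :
    (ptrace2 A).IsHermitian :=
  ext fun i i' => by simp only [conjTranspose_apply, ptrace2, of_apply, star_sum, hA.apply]

lemma ptrace1_isHermitian [Fintype I] {A : Matrix (I × J) (I × J) ℂ} (hA : A.IsHermitian) :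
    (ptrace1 A).IsHermitian :=
  ext fun j j' => by simp only [conjTranspose_apply, ptrace1, of_apply, star_sum, hA.apply]

lemma trace_ptrace2 [Fintype I] [Fintype J] (A : Matrix (I × J) (I × J) ℂ) :
    (ptrace2 A).trace = A.trace := by
  simp only [trace, ptrace2, diag_apply, of_apply, Fintype.sum_prod_type]

lemma trace_ptrace1 [Fintype I] [Fintype J] (A : Matrix (I × J) (I × J) ℂ) :
    (ptrace1 A).trace = A.trace := by
  simp only [trace, ptrace1, diag_apply, of_apply, Fintype.sum_prod_type]
  exact Finset.sum_comm

lemma ptrace2_kronecker [Fintype J] (θ : Matrix I I ℂ) (κ : Matrix J J ℂ) :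
    ptrace2 (θ ⊗ₖ κ) = κ.trace • θ :=
  ext fun i i' => by
    simp only [ptrace2, of_apply, kroneckerMap_apply, ← Finset.mul_sum, Matrix.smul_apply,
      smul_eq_mul, mul_comm, trace, diag_apply]

lemma ptrace1_kronecker [Fintype I] (θ : Matrix I I ℂ) (κ : Matrix J J ℂ) :
    ptrace1 (θ ⊗ₖ κ) = θ.trace • κ :=
  ext fun j j' => by
    simp only [ptrace1, of_apply, kroneckerMap_apply, ← Finset.sum_mul, Matrix.smul_apply,
      smul_eq_mul, trace, diag_apply]

lemma MI_kronecker [Fintype I] [Fintype J] [DecidableEq I] [DecidableEq J]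
    {θ : Matrix I I ℂ} {κ : Matrix J J ℂ} (hθ : θ.IsHermitian) (hκ : κ.IsHermitian)
    (htrθ : θ.trace = 1) (htrκ : κ.trace = 1) :
    MI (θ ⊗ₖ κ) = 0 := by
  rw [MI, ptrace2_kronecker, ptrace1_kronecker, htrθ, htrκ, one_smul, one_smul,
    vnEntropy_kronecker hθ hκ htrθ htrκ, sub_self]

end PartialTrace

section ClassicalQuantum

variable {K L E : Type*} [DecidableEq E]

/-- The classical-quantum state `∑ₑ q e • (ρ e ⊗ |e⟩⟨e|)` on `K × L × E`. -/
def cqState (q : E → ℝ) (ρ : E → Matrix (K × L) (K × L) ℂ) : Matrix (K × L × E) (K × L × E) ℂ :=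
  Matrix.of fun p p' =>
    if p.2.2 = p'.2.2 then (q p.2.2 : ℂ) * ρ p.2.2 (p.1, p.2.1) (p'.1, p'.2.1) else 0

lemma cqState_eq_reindex_blockDiagonal (q : E → ℝ) (ρ : E → Matrix (K × L) (K × L) ℂ) :
    cqState q ρ = reindex (Equiv.prodAssoc K L E) (Equiv.prodAssoc K L E)
      (blockDiagonal fun e => (q e : ℂ) • ρ e) := by
  ext ⟨k, l, e⟩ ⟨k', l', e'⟩
  simp [cqState, blockDiagonal_apply]

lemma margKM_cqState [Fintype L] (q : E → ℝ) (ρ : E → Matrix (K × L) (K × L) ℂ) :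
    margKM (cqState q ρ) = blockDiagonal fun e => (q e : ℂ) • ptrace2 (ρ e) := by
  ext ⟨k, e⟩ ⟨k', e'⟩
  by_cases h : e = e' <;> simp [margKM, cqState, ptrace2, blockDiagonal_apply, Finset.mul_sum, h]

lemma margLM_cqState [Fintype K] (q : E → ℝ) (ρ : E → Matrix (K × L) (K × L) ℂ) :
    margLM (cqState q ρ) = blockDiagonal fun e => (q e : ℂ) • ptrace1 (ρ e) := by
  ext ⟨l, e⟩ ⟨l', e'⟩
  by_cases h : e = e' <;> simp [margLM, cqState, ptrace1, blockDiagonal_apply, Finset.mul_sum, h]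

lemma margM_cqState [Fintype K] [Fintype L] (q : E → ℝ) {ρ : E → Matrix (K × L) (K × L) ℂ}
    (htr : ∀ e, (ρ e).trace = 1) : margM (cqState q ρ) = diagonal fun e => (q e : ℂ) := by
  ext e e'
  by_cases h : e = e'
  · subst h
    simpa [margM, cqState, trace, Fintype.sum_prod_type, Finset.mul_sum] using
      congrArg ((q e : ℂ) * ·) (htr e)
  · simp [margM, cqState, h]

theorem CMI_cqState [Fintype K] [Fintype L] [Fintype E] [DecidableEq K] [DecidableEq L]
    (q : E → ℝ) {ρ : E → Matrix (K × L) (K × L) ℂ} (hρ : ∀ e, (ρ e).IsHermitian)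
    (htr : ∀ e, (ρ e).trace = 1) : CMI (cqState q ρ) = ∑ e, q e * MI (ρ e) := by
  have hKLE : vnEntropy (cqState q ρ) = ∑ e, (q e * vnEntropy (ρ e) + entPhi (q e)) := by
    rw [cqState_eq_reindex_blockDiagonal, vnEntropy_reindex, vnEntropy_blockDiagonal_smul q hρ htr]
    exact isHermitian_blockDiagonal_iff.mpr fun e => (hρ e).smul (Complex.conj_ofReal (q e))
  have hKE : vnEntropy (margKM (cqState q ρ))
      = ∑ e, (q e * vnEntropy (ptrace2 (ρ e)) + entPhi (q e)) := by
    rw [margKM_cqState]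
    exact vnEntropy_blockDiagonal_smul q (fun e => ptrace2_isHermitian (hρ e))
      (fun e => (trace_ptrace2 _).trans (htr e))
  have hLE : vnEntropy (margLM (cqState q ρ))
      = ∑ e, (q e * vnEntropy (ptrace1 (ρ e)) + entPhi (q e)) := by
    rw [margLM_cqState]
    exact vnEntropy_blockDiagonal_smul q (fun e => ptrace1_isHermitian (hρ e))
      (fun e => (trace_ptrace1 _).trans (htr e))
  have hE : vnEntropy (margM (cqState q ρ)) = ∑ e, entPhi (q e) := by
    rw [margM_cqState q htr, vnEntropy_diagonal]
  rw [CMI, hKE, hLE, hKLE, hE, ← Finset.sum_add_distrib, ← Finset.sum_sub_distrib,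
    ← Finset.sum_sub_distrib]
  refine Finset.sum_congr rfl fun e _ => ?_
  rw [MI]
  ring

end ClassicalQuantum

theorem cmi_classical_conditioning_general {K L : Type*}
    [Fintype K] [Fintype L] [DecidableEq K] [DecidableEq L]
    {n : ℕ}
    (q : Fin n → ℝ) (hq : IsProbDist q)
    (ρ : Fin n → Matrix (K × L) (K × L) ℂ)
    (hρ : ∀ lam, (ρ lam).PosSemidef ∧ (ρ lam).trace = 1)
    (ρKLE : Matrix (K × L × Fin n) (K × L × Fin n) ℂ)
    (hρKLE : ρKLE = Matrix.of fun p p' =>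
      if p.2.2 = p'.2.2 then (q p.2.2 : ℂ) * ρ p.2.2 (p.1, p.2.1) (p'.1, p'.2.1) else 0) :
    (CMI ρKLE = ∑ lam ∈ Finset.univ.filter (fun lam => 0 < q lam), q lam * MI (ρ lam)) ∧
    ((∀ lam, ∃ (θ : Matrix K K ℂ) (κ : Matrix L L ℂ),
        θ.PosSemidef ∧ θ.trace = 1 ∧ κ.PosSemidef ∧ κ.trace = 1 ∧ ρ lam = θ ⊗ₖ κ) →
      CMI ρKLE = 0) := by
  have hCMI : CMI ρKLE = ∑ lam, q lam * MI (ρ lam) :=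
    hρKLE ▸ CMI_cqState q (fun lam => (hρ lam).1.isHermitian) fun lam => (hρ lam).2
  refine ⟨?_, fun hprod => ?_⟩
  · rw [hCMI, Finset.sum_filter_of_ne]
    intro lam _ hlam
    exact (hq.1 lam).lt_of_ne' (left_ne_zero_of_mul hlam)
  · rw [hCMI]
    refine Finset.sum_eq_zero fun lam _ => ?_
    obtain ⟨θ, κ, hθ, htrθ, hκ, htrκ, hprod⟩ := hprod lam
    rw [hprod, MI_kronecker hθ.isHermitian hκ.isHermitian htrθ htrκ, mul_zero]

/-- CMI with a classical conditioning system is the average of mutual informations, and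
it vanishes when each conditional state is a product state. -/
theorem cmi_classical_conditioning {K L : Type*}
    [Fintype K] [Fintype L] [DecidableEq K] [DecidableEq L]
    {n : ℕ} (hn : 1 ≤ n)
    (q : Fin n → ℝ) (hq : IsProbDist q)
    (ρ : Fin n → Matrix (K × L) (K × L) ℂ)
    (hρ : ∀ lam, (ρ lam).PosSemidef ∧ (ρ lam).trace = 1)
    (ρKLE : Matrix (K × L × Fin n) (K × L × Fin n) ℂ)
    (hρKLE : ρKLE = Matrix.of fun p p' =>
      if p.2.2 = p'.2.2 then (q p.2.2 : ℂ) * ρ p.2.2 (p.1, p.2.1) (p'.1, p'.2.1) else 0) :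
    (CMI ρKLE = ∑ lam ∈ Finset.univ.filter (fun lam => 0 < q lam), q lam * MI (ρ lam)) ∧
    ((∀ lam, ∃ (θ : Matrix K K ℂ) (κ : Matrix L L ℂ),
        θ.PosSemidef ∧ θ.trace = 1 ∧ κ.PosSemidef ∧ κ.trace = 1 ∧ ρ lam = θ ⊗ₖ κ) →
      CMI ρKLE = 0) :=
  cmi_classical_conditioning_general q hq ρ hρ ρKLE hρKLE
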